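/- Let d ∈ ℕ, T ∈ (0,∞), ξ ∈ ℝ^d, let W : [0,T] × Ω → ℝ^d be a standard Brownian motion, let k ∈ ℕ₀, n ∈ ℕ, r₁,…,rₙ ∈ ℝ, let U₁,…,Uₙ : [0,T] × ℝ^d × Ω → ℝ be continuous i.i.d. random fields independent of W with E[|U₁(t,x)|] < ∞ for all t, x. Then, with the semi-norms ‖·‖ₖ defined by ‖V‖₀² = E[|V(0,ξ)|²] and ‖V‖ₖ² = (1/Tᵏ)∫₀ᵀ (t^{k-1}/(k-1)!) E[|V(t,ξ+W_t)|²] dt for k ≥ 1, it holds that ‖Σᵢ rᵢ(Uᵢ − E[Uᵢ])‖ₖ = ‖U₁ − E[U₁]‖ₖ · (Σᵢ |rᵢ|²)^{1/2} ≤ ‖U₁‖ₖ · (Σᵢ |rᵢ|²)^{1/2}. -/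

import Mathlib

/-!
At a fixed point `(t, x)` the values `Uᵢ(t, x)` are i.i.d., so the variance of
`∑ rᵢ Uᵢ(t, x)` is `∑ rᵢ²` times that of `U₁(t, x)`; in `ℝ≥0∞` this holds even when the variances
are infinite, because an independent summand of a square-integrable sum is square-integrable.
Centering can only lower a second moment. As the fields are independent of `W`, the random point
`ξ + W_t` can be frozen: integrate over `ω` at a fixed `x` first, then against the law of
`ξ + W_t`. The joint measurability in `(x, ω)` this requires comes from continuity in `x`.
Both facts then pass through the time integral defining `‖·‖ₖ`.
-/

open MeasureTheory ProbabilityTheory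
open scoped NNReal ENNReal

/-- The σ-algebra on `Ω` generated by a family of functions `f i : Ω → β`. -/
def sigmaGen {Ω ι β : Type*} [MeasurableSpace β] (f : ι → Ω → β) : MeasurableSpace Ω :=
  ⨆ i, MeasurableSpace.comap (f i) inferInstance

/-- `W` is a standard `d`-dimensional Brownian motion on `[0, T]` (with continuous sample
paths): it starts at `0`, has continuous paths, measurable evaluations, independent
increments, and its increments have independent coordinates, each one centered Gaussian with
variance given by the length of the time increment. -/
def IsStandardBM {Ω : Type*} [MeasurableSpace Ω] (P : Measure Ω) {d : ℕ} (T : ℝ)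
    (W : ℝ → Ω → EuclideanSpace ℝ (Fin d)) : Prop :=
  (∀ ω, W 0 ω = 0) ∧
  (∀ ω, Continuous (fun t => W t ω)) ∧
  (∀ t, Measurable (W t)) ∧
  (∀ (n : ℕ) (t : ℕ → ℝ), Monotone t →
    iIndepFun
      (fun (i : Fin n) ω => W (t (i + 1)) ω - W (t i) ω) P) ∧
  (∀ s t : ℝ, 0 ≤ s → s ≤ t → t ≤ T →
    (iIndepFun
        (fun (i : Fin d) ω => (W t ω - W s ω) i) P ∧
      ∀ i : Fin d, P.map (fun ω => (W t ω - W s ω) i)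
        = gaussianReal 0 (Real.toNNReal (t - s))))

/-- The squared semi-norm `‖V‖ₖ²`: for `k = 0` it is `E[|V(0, ξ)|²]`, and for `k ≥ 1` it is
`(1/Tᵏ) ∫₀ᵀ t^(k-1)/(k-1)! E[|V(t, ξ + W_t)|²] dt`. -/
noncomputable def mlpSeminormSq {Ω : Type*} [MeasurableSpace Ω] (P : Measure Ω) {d : ℕ}
    (W : ℝ → Ω → EuclideanSpace ℝ (Fin d)) (ξ : EuclideanSpace ℝ (Fin d)) (T : ℝ) (k : ℕ)
    (V : ℝ → EuclideanSpace ℝ (Fin d) → Ω → ℝ) : ℝ≥0∞ :=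
  match k with
  | 0 => ∫⁻ ω, ENNReal.ofReal (|V 0 ξ ω| ^ 2) ∂P
  | Nat.succ j =>
      ENNReal.ofReal (1 / T ^ (j + 1)) *
        ∫⁻ t in Set.Icc (0 : ℝ) T,
          (ENNReal.ofReal (t ^ j / (Nat.factorial j)) *
            ∫⁻ ω, ENNReal.ofReal (|V t (ξ + W t ω) ω| ^ 2) ∂P)

/-- The semi-norm `‖V‖ₖ`. -/
noncomputable def mlpSeminorm {Ω : Type*} [MeasurableSpace Ω] (P : Measure Ω) {d : ℕ}
    (W : ℝ → Ω → EuclideanSpace ℝ (Fin d)) (ξ : EuclideanSpace ℝ (Fin d)) (T : ℝ) (k : ℕ)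
    (V : ℝ → EuclideanSpace ℝ (Fin d) → Ω → ℝ) : ℝ≥0∞ :=
  (mlpSeminormSq P W ξ T k V) ^ (1 / 2 : ℝ)

section SigmaGen

variable {Ω ι β : Type*} [MeasurableSpace β]

theorem measurable_sigmaGen (f : ι → Ω → β) (i : ι) : Measurable[sigmaGen f] (f i) :=
  Measurable.of_comap_le (le_iSup (fun i => MeasurableSpace.comap (f i) inferInstance) i)

theorem sigmaGen_le [mΩ : MeasurableSpace Ω] {f : ι → Ω → β} (hf : ∀ i, Measurable (f i)) :
    sigmaGen f ≤ mΩ :=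
  iSup_le fun i => (hf i).comap_le

end SigmaGen

namespace ProbabilityTheory

theorem iIndep.iIndepFun_of_measurable {Ω ι β : Type*} [MeasurableSpace Ω]
    [MeasurableSpace β] {P : Measure Ω} {m : ι → MeasurableSpace Ω} (h : iIndep m P)
    {f : ι → Ω → β} (hf : ∀ i, Measurable[m i] (f i)) : iIndepFun f P :=
  (iIndepFun_iff_iIndep _ _ _).2 (iIndep_of_iIndep_of_le h fun i => (hf i).comap_le)

theorem identDistrib_of_map_fin_one_eq {Ω β : Type*} [MeasurableSpace Ω]
    [MeasurableSpace β] {P : Measure Ω} {f g : Ω → β} (hf : Measurable f) (hg : Measurable g)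
    (h : P.map (fun ω (_ : Fin 1) => f ω) = P.map (fun ω _ => g ω)) : IdentDistrib f g P P := by
  refine ⟨hf.aemeasurable, hg.aemeasurable, ?_⟩
  have h0 := congrArg (Measure.map fun v : Fin 1 → β => v 0) h
  rwa [Measure.map_map (measurable_pi_apply 0) (measurable_pi_lambda _ fun _ => hf),
    Measure.map_map (measurable_pi_apply 0) (measurable_pi_lambda _ fun _ => hg)] at h0

section Variance

variable {Ω : Type*} [MeasurableSpace Ω] {P : Measure Ω} [IsProbabilityMeasure P]

/-- By Fubini, `x + Y ∈ L²` for `P_X`-almost every `x`. -/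
theorem IndepFun.memLp_two_right_of_add {X Y : Ω → ℝ} (hXY : IndepFun X Y P)
    (hX : Measurable X) (hY : Measurable Y) (h : MemLp (X + Y) 2 P) : MemLp Y 2 P := by
  have : IsProbabilityMeasure (P.map X) := Measure.isProbabilityMeasure_map hX.aemeasurable
  have hf : Measurable fun p : ℝ × ℝ => ‖p.1 + p.2‖ₑ ^ 2 := by fun_prop
  have hprod : ∫⁻ p, ‖p.1 + p.2‖ₑ ^ 2 ∂(P.map X).prod (P.map Y) < ∞ := by
    rw [← (indepFun_iff_map_prod_eq_prod_map_map hX.aemeasurable hY.aemeasurable).1 hXY,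
      lintegral_map hf (hX.prodMk hY)]
    simpa [HasFiniteIntegral, enorm_pow] using h.integrable_sq.hasFiniteIntegral
  rw [lintegral_prod _ hf.aemeasurable] at hprod
  obtain ⟨x, hx⟩ := (ae_lt_top' (hf.lintegral_prod_right'.aemeasurable) hprod.ne).exists
  have hshift : MemLp (fun y => x + y) 2 (P.map Y) := by
    rw [memLp_two_iff_integrable_sq (by fun_prop)]
    exact ⟨by fun_prop, by simpa [HasFiniteIntegral, enorm_pow] using hx⟩
  have hidLp : MemLp id 2 (P.map Y) := by
    convert hshift.sub (memLp_const x) using 1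
    ext y
    simp
  exact (memLp_map_measure_iff aestronglyMeasurable_id hY.aemeasurable).1 hidLp

theorem IndepFun.evariance_add {X Y : Ω → ℝ} (hXY : IndepFun X Y P)
    (hX : Measurable X) (hY : Measurable Y) :
    evariance (X + Y) P = evariance X P + evariance Y P := by
  by_cases hX2 : MemLp X 2 P
  · by_cases hY2 : MemLp Y 2 P
    · rw [← hX2.ofReal_variance_eq, ← hY2.ofReal_variance_eq,
        ← (hX2.add hY2).ofReal_variance_eq, hXY.variance_add hX2 hY2,
        ENNReal.ofReal_add (variance_nonneg _ _) (variance_nonneg _ _)]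
    · have hXY2 : ¬MemLp (X + Y) 2 P := fun h => hY2 (hXY.memLp_two_right_of_add hX hY h)
      rw [evariance_eq_top (by fun_prop) hXY2, evariance_eq_top hY.aestronglyMeasurable hY2,
        add_top]
  · have hXY2 : ¬MemLp (X + Y) 2 P := fun h =>
      hX2 (hXY.symm.memLp_two_right_of_add hY hX (add_comm X Y ▸ h))
    rw [evariance_eq_top (by fun_prop) hXY2, evariance_eq_top hX.aestronglyMeasurable hX2,
      top_add]

theorem iIndepFun.evariance_sum {ι : Type*} {V : ι → Ω → ℝ} (h : iIndepFun V P)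
    (hV : ∀ i, Measurable (V i)) (s : Finset ι) :
    evariance (∑ i ∈ s, V i) P = ∑ i ∈ s, evariance (V i) P := by
  classical
  induction s using Finset.induction_on with
  | empty => simp
  | insert j s hj ih =>
    rw [Finset.sum_insert hj, Finset.sum_insert hj,
      IndepFun.evariance_add (h.indepFun_finsetSum_of_notMem hV hj).symm (hV j)
        (by fun_prop), ih]

theorem evariance_sum_mul_of_identDistrib {ι : Type*} [Fintype ι] (r : ι → ℝ)
    {V : ι → Ω → ℝ} (hV : ∀ i, Measurable (V i)) (h : iIndepFun V P) {i₀ : ι}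
    (hid : ∀ i, IdentDistrib (V i) (V i₀) P P) :
    evariance (fun ω => ∑ i, r i * V i ω) P
      = ENNReal.ofReal (∑ i, r i ^ 2) * evariance (V i₀) P := by
  have hrV : iIndepFun (fun i ω => r i * V i ω) P := h.comp _ fun i => measurable_const_mul (r i)
  calc evariance (fun ω => ∑ i, r i * V i ω) P
      = evariance (∑ i, fun ω => r i * V i ω) P := by simp only [Finset.sum_fn]
    _ = ∑ i, ENNReal.ofReal (r i ^ 2) * evariance (V i₀) P := by
      simp only [hrV.evariance_sum (fun i => (hV i).const_mul (r i)), evariance_mul,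
        (hid _).evariance_eq]
    _ = _ := by rw [← Finset.sum_mul, ENNReal.ofReal_sum_of_nonneg fun i _ => sq_nonneg (r i)]

theorem lintegral_sq_sum_mul_sub_integral_of_identDistrib {ι : Type*} [Fintype ι] (r : ι → ℝ)
    {V : ι → Ω → ℝ} (hV : ∀ i, Measurable (V i)) (h : iIndepFun V P) {i₀ : ι}
    (hid : ∀ i, IdentDistrib (V i) (V i₀) P P) (hint : Integrable (V i₀) P) :
    ∫⁻ ω, ENNReal.ofReal (|∑ i, r i * (V i ω - ∫ ω', V i ω' ∂P)| ^ 2) ∂P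
      = ENNReal.ofReal (∑ i, r i ^ 2) *
          ∫⁻ ω, ENNReal.ofReal (|V i₀ ω - ∫ ω', V i₀ ω' ∂P| ^ 2) ∂P := by
  have hmean : ∫ ω, ∑ i, r i * V i ω ∂P = ∑ i, r i * ∫ ω, V i ω ∂P := by
    rw [integral_finsetSum _ fun i _ => (((hid i).integrable_iff).2 hint).const_mul (r i)]
    simp only [integral_const_mul]
  calc ∫⁻ ω, ENNReal.ofReal (|∑ i, r i * (V i ω - ∫ ω', V i ω' ∂P)| ^ 2) ∂P
      = evariance (fun ω => ∑ i, r i * V i ω) P := by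
        simp only [evariance_eq_lintegral_ofReal, hmean, sq_abs, mul_sub, Finset.sum_sub_distrib]
    _ = ENNReal.ofReal (∑ i, r i ^ 2) * evariance (V i₀) P :=
        evariance_sum_mul_of_identDistrib r hV h hid
    _ = _ := by simp only [evariance_eq_lintegral_ofReal, sq_abs]

theorem lintegral_sq_sub_integral_le {V : Ω → ℝ} (hV : AEStronglyMeasurable V P) :
    ∫⁻ ω, ENNReal.ofReal (|V ω - ∫ ω', V ω' ∂P| ^ 2) ∂P
      ≤ ∫⁻ ω, ENNReal.ofReal (|V ω| ^ 2) ∂P := by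
  calc ∫⁻ ω, ENNReal.ofReal (|V ω - ∫ ω', V ω' ∂P| ^ 2) ∂P = evariance V P := by
        simp only [evariance_eq_lintegral_ofReal, sq_abs]
    _ ≤ ∫⁻ ω, ‖V ω‖ₑ ^ 2 ∂P := by
        rw [evariance_def' hV]
        exact tsub_le_self
    _ = _ := by simp only [Real.enorm_eq_ofReal_abs, ENNReal.ofReal_pow (abs_nonneg _)]

end Variance

section Freezing

variable {Ω E : Type*} [mE : MeasurableSpace E] {m' mX : MeasurableSpace Ω}
  [mΩ : MeasurableSpace Ω] {P : Measure Ω} [IsProbabilityMeasure P]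

theorem Indep.lintegral_comp_eq_lintegral_map (hind : Indep m' mX P) (hm' : m' ≤ mΩ)
    (hmX : mX ≤ mΩ) {X : Ω → E} (hX : Measurable[mX] X) {f : E × Ω → ℝ≥0∞}
    (hf : Measurable[mE.prod m'] f) :
    ∫⁻ ω, f (X ω, ω) ∂P = ∫⁻ x, ∫⁻ ω, f (x, ω) ∂P ∂(P.map X) := by
  have hXm : Measurable X := hX.mono hmX le_rfl
  have : IsFiniteMeasure (P.trim hm') := isFiniteMeasure_trim hm'
  have : IsProbabilityMeasure (P.map X) := Measure.isProbabilityMeasure_map hXm.aemeasurable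
  have hgraph : Measurable[mΩ, mE.prod m'] fun ω => (X ω, ω) :=
    hXm.prodMk (measurable_id.mono le_rfl hm')
  have hlaw : @Measure.prod E Ω mE m' (P.map X) (P.trim hm')
      = @Measure.map _ _ _ (mE.prod m') (fun ω => (X ω, ω)) P := by
    refine @Measure.prod_eq E Ω mE m' _ _ _ _ _ fun s t hs ht => ?_
    have hpre : (fun ω => (X ω, ω)) ⁻¹' (s ×ˢ t) = t ∩ X ⁻¹' s := by
      ext ω; simp [and_comm]
    rw [Measure.map_apply hgraph (@MeasurableSet.prod E Ω mE m' s t hs ht), hpre,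
      (Indep_iff _ _ _).1 hind t _ ht (hX hs), Measure.map_apply hXm hs,
      trim_measurableSet_eq hm' ht, mul_comm]
  rw [← @lintegral_map _ _ _ (mE.prod m') _ _ _ hf hgraph, ← hlaw,
    @lintegral_prod E Ω mE m' _ _ _ _ hf.aemeasurable]
  exact lintegral_congr fun x =>
    lintegral_trim hm' (hf.comp (@measurable_prodMk_left E Ω mE m' x))

end Freezing

section RandomField

open TopologicalSpace

variable {Ω E : Type*} [TopologicalSpace E] [MetrizableSpace E] [SecondCountableTopology E]
  [mE : MeasurableSpace E] [OpensMeasurableSpace E] {m' mX : MeasurableSpace Ω}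
  [mΩ : MeasurableSpace Ω] {P : Measure Ω}

theorem measurable_uncurry_sub_integral [SFinite P] (hm' : m' ≤ mΩ) {F : E → Ω → ℝ}
    (hc : ∀ ω, Continuous fun x => F x ω) (hF : ∀ x, Measurable[m'] (F x)) :
    Measurable[mE.prod m'] fun p : E × Ω => F p.1 p.2 - ∫ ω, F p.1 ω ∂P := by
  have hmean : Measurable fun x => ∫ ω, F x ω ∂P :=
    (measurable_uncurry_of_continuous_of_measurable hc fun x => (hF x).mono hm' le_rfl)
      |>.stronglyMeasurable.integral_prod_right'.measurable
  exact (measurable_uncurry_of_continuous_of_measurable (m := m') hc hF).sub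
    (hmean.comp measurable_fst)

variable [IsProbabilityMeasure P]

theorem Indep.lintegral_sq_sum_mul_sub_integral_comp_eq (hind : Indep m' mX P)
    (hm' : m' ≤ mΩ) (hmX : mX ≤ mΩ) {X : Ω → E} (hX : Measurable[mX] X)
    {ι : Type*} [Fintype ι] (r : ι → ℝ) {F : ι → E → Ω → ℝ} {i₀ : ι}
    (hc : ∀ i ω, Continuous fun x => F i x ω) (hF : ∀ i x, Measurable[m'] (F i x))
    (hindep : ∀ x, iIndepFun (fun i => F i x) P)
    (hid : ∀ i x, IdentDistrib (F i x) (F i₀ x) P P) (hint : ∀ x, Integrable (F i₀ x) P) :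
    ∫⁻ ω, ENNReal.ofReal (|∑ i, r i * (F i (X ω) ω - ∫ ω', F i (X ω) ω' ∂P)| ^ 2) ∂P
      = ENNReal.ofReal (∑ i, r i ^ 2) *
          ∫⁻ ω, ENNReal.ofReal (|F i₀ (X ω) ω - ∫ ω', F i₀ (X ω) ω' ∂P| ^ 2) ∂P := by
  have hmeas := fun i => measurable_uncurry_sub_integral (P := P) hm' (hc i) (hF i)
  rw [hind.lintegral_comp_eq_lintegral_map hm' hmX hX
      (f := fun p => ENNReal.ofReal (|∑ i, r i * (F i p.1 p.2 - ∫ ω', F i p.1 ω' ∂P)| ^ 2))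
      (by let := m'; exact (Finset.measurable_sum _ fun i _ => (hmeas i).const_mul (r i))
        |>.abs.pow_const 2 |>.ennreal_ofReal),
    hind.lintegral_comp_eq_lintegral_map hm' hmX hX
      (f := fun p => ENNReal.ofReal (|F i₀ p.1 p.2 - ∫ ω', F i₀ p.1 ω' ∂P| ^ 2))
      (by let := m'; exact ((hmeas i₀).abs.pow_const 2).ennreal_ofReal),
    ← lintegral_const_mul' _ _ ENNReal.ofReal_ne_top]
  exact lintegral_congr fun x => lintegral_sq_sum_mul_sub_integral_of_identDistrib r
    (fun i => (hF i x).mono hm' le_rfl) (hindep x) (fun i => hid i x) (hint x)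

theorem Indep.lintegral_sq_sub_integral_comp_le (hind : Indep m' mX P)
    (hm' : m' ≤ mΩ) (hmX : mX ≤ mΩ) {X : Ω → E} (hX : Measurable[mX] X) {F : E → Ω → ℝ}
    (hc : ∀ ω, Continuous fun x => F x ω) (hF : ∀ x, Measurable[m'] (F x)) :
    ∫⁻ ω, ENNReal.ofReal (|F (X ω) ω - ∫ ω', F (X ω) ω' ∂P| ^ 2) ∂P
      ≤ ∫⁻ ω, ENNReal.ofReal (|F (X ω) ω| ^ 2) ∂P := by
  have hmeas := measurable_uncurry_sub_integral (P := P) hm' hc hF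
  rw [hind.lintegral_comp_eq_lintegral_map hm' hmX hX
      (f := fun p => ENNReal.ofReal (|F p.1 p.2 - ∫ ω', F p.1 ω' ∂P| ^ 2))
      (by let := m'; exact (hmeas.abs.pow_const 2).ennreal_ofReal),
    hind.lintegral_comp_eq_lintegral_map hm' hmX hX
      (f := fun p => ENNReal.ofReal (|F p.1 p.2| ^ 2))
      (by let := m'; exact (measurable_uncurry_of_continuous_of_measurable hc hF).abs.pow_const 2
        |>.ennreal_ofReal)]
  exact lintegral_mono fun x =>
    lintegral_sq_sub_integral_le ((hF x).mono hm' le_rfl).aestronglyMeasurable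

end RandomField

end ProbabilityTheory

section Seminorm

variable {Ω : Type*} [MeasurableSpace Ω] {P : Measure Ω} {d : ℕ}
  {W : ℝ → Ω → EuclideanSpace ℝ (Fin d)} {ξ : EuclideanSpace ℝ (Fin d)} {T : ℝ} {k : ℕ}
  {V V' : ℝ → EuclideanSpace ℝ (Fin d) → Ω → ℝ}

theorem mlpSeminormSq_eq_const_mul (hW0 : ∀ ω, W 0 ω = 0) {c : ℝ≥0∞} (hc : c ≠ ∞)
    (h : ∀ t, ∫⁻ ω, ENNReal.ofReal (|V t (ξ + W t ω) ω| ^ 2) ∂P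
      = c * ∫⁻ ω, ENNReal.ofReal (|V' t (ξ + W t ω) ω| ^ 2) ∂P) :
    mlpSeminormSq P W ξ T k V = c * mlpSeminormSq P W ξ T k V' := by
  cases k with
  | zero => simpa [mlpSeminormSq, hW0] using h 0
  | succ j =>
    simp only [mlpSeminormSq, h, mul_left_comm _ c]
    rw [lintegral_const_mul' _ _ hc, mul_left_comm]

theorem mlpSeminormSq_mono (hW0 : ∀ ω, W 0 ω = 0)
    (h : ∀ t, ∫⁻ ω, ENNReal.ofReal (|V t (ξ + W t ω) ω| ^ 2) ∂P
      ≤ ∫⁻ ω, ENNReal.ofReal (|V' t (ξ + W t ω) ω| ^ 2) ∂P) :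
    mlpSeminormSq P W ξ T k V ≤ mlpSeminormSq P W ξ T k V' := by
  cases k with
  | zero => simpa [mlpSeminormSq, hW0] using h 0
  | succ j =>
    exact mul_le_mul_right (lintegral_mono fun t => mul_le_mul_right (h t) _) _

theorem mlpSeminorm_eq_mul_sqrt (hW0 : ∀ ω, W 0 ω = 0) {c : ℝ} (hc : 0 ≤ c)
    (h : ∀ t, ∫⁻ ω, ENNReal.ofReal (|V t (ξ + W t ω) ω| ^ 2) ∂P
      = ENNReal.ofReal c * ∫⁻ ω, ENNReal.ofReal (|V' t (ξ + W t ω) ω| ^ 2) ∂P) :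
    mlpSeminorm P W ξ T k V = mlpSeminorm P W ξ T k V' * ENNReal.ofReal (√c) := by
  rw [mlpSeminorm, mlpSeminorm, mlpSeminormSq_eq_const_mul hW0 ENNReal.ofReal_ne_top h,
    ENNReal.mul_rpow_of_nonneg _ _ (by norm_num), mul_comm, Real.sqrt_eq_rpow,
    ENNReal.ofReal_rpow_of_nonneg hc (by norm_num)]

theorem mlpSeminorm_mono (hW0 : ∀ ω, W 0 ω = 0)
    (h : ∀ t, ∫⁻ ω, ENNReal.ofReal (|V t (ξ + W t ω) ω| ^ 2) ∂P
      ≤ ∫⁻ ω, ENNReal.ofReal (|V' t (ξ + W t ω) ω| ^ 2) ∂P) :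
    mlpSeminorm P W ξ T k V ≤ mlpSeminorm P W ξ T k V' :=
  ENNReal.rpow_le_rpow (mlpSeminormSq_mono hW0 h) (by norm_num)

theorem mlpSeminorm_le_mul_sqrt (hW0 : ∀ ω, W 0 ω = 0) {c : ℝ} (hc : 0 ≤ c)
    {V'' : ℝ → EuclideanSpace ℝ (Fin d) → Ω → ℝ}
    (h : ∀ t, ∫⁻ ω, ENNReal.ofReal (|V t (ξ + W t ω) ω| ^ 2) ∂P
      = ENNReal.ofReal c * ∫⁻ ω, ENNReal.ofReal (|V' t (ξ + W t ω) ω| ^ 2) ∂P)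
    (h' : ∀ t, ∫⁻ ω, ENNReal.ofReal (|V' t (ξ + W t ω) ω| ^ 2) ∂P
      ≤ ∫⁻ ω, ENNReal.ofReal (|V'' t (ξ + W t ω) ω| ^ 2) ∂P) :
    mlpSeminorm P W ξ T k V ≤ mlpSeminorm P W ξ T k V'' * ENNReal.ofReal (√c) :=
  (mlpSeminorm_eq_mul_sqrt hW0 hc h).trans_le (mul_le_mul_left (mlpSeminorm_mono hW0 h') _)

end Seminorm


theorem seminorm_linear_combination_iid_general
    {Ω : Type*} [mΩ : MeasurableSpace Ω] (P : Measure Ω) [IsProbabilityMeasure P]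
    (d : ℕ) (T : ℝ) (ξ : EuclideanSpace ℝ (Fin d))
    (W : ℝ → Ω → EuclideanSpace ℝ (Fin d)) (hW : IsStandardBM P T W)
    (k n : ℕ) (hn : 0 < n) (r : Fin n → ℝ)
    (U : Fin n → ℝ → EuclideanSpace ℝ (Fin d) → Ω → ℝ)
    (hUcont : ∀ i ω, Continuous (fun p : ℝ × EuclideanSpace ℝ (Fin d) => U i p.1 p.2 ω))
    (hUmeas : ∀ i t x, Measurable (U i t x))
    -- the random fields `U 0, …, U (n-1)` are mutually independent
    (hUindep : iIndep
      (fun i : Fin n =>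
        sigmaGen (fun (p : ℝ × EuclideanSpace ℝ (Fin d)) ω => U i p.1 p.2 ω)) P)
    -- the random fields `U 0, …, U (n-1)` are identically distributed
    -- (all finite-dimensional distributions agree)
    (hUident : ∀ (i : Fin n) (m : ℕ) (a : Fin m → ℝ × EuclideanSpace ℝ (Fin d)),
      P.map (fun ω => fun j => U i (a j).1 (a j).2 ω)
        = P.map (fun ω => fun j => U ⟨0, hn⟩ (a j).1 (a j).2 ω))
    -- the family `(Uᵢ)` is independent of `W`
    (hindW : Indep
      (sigmaGen (fun (q : Fin n × (ℝ × EuclideanSpace ℝ (Fin d))) ω =>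
        U q.1 q.2.1 q.2.2 ω))
      (sigmaGen W) P)
    (hint : ∀ t x, Integrable (U ⟨0, hn⟩ t x) P) :
    mlpSeminorm P W ξ T k
        (fun t x ω => ∑ i, r i * (U i t x ω - ∫ ω', U i t x ω' ∂P))
      = mlpSeminorm P W ξ T k
          (fun t x ω => U ⟨0, hn⟩ t x ω - ∫ ω', U ⟨0, hn⟩ t x ω' ∂P)
        * ENNReal.ofReal (Real.sqrt (∑ i, |r i| ^ 2))
    ∧ mlpSeminorm P W ξ T k
        (fun t x ω => ∑ i, r i * (U i t x ω - ∫ ω', U i t x ω' ∂P))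
      ≤ mlpSeminorm P W ξ T k (U ⟨0, hn⟩)
        * ENNReal.ofReal (Real.sqrt (∑ i, |r i| ^ 2)) := by
  have hmU := sigmaGen_le fun q : Fin n × (ℝ × EuclideanSpace ℝ (Fin d)) =>
    hUmeas q.1 q.2.1 q.2.2
  have hmW : sigmaGen W ≤ mΩ := sigmaGen_le hW.2.2.1
  have hUm := fun i t x => measurable_sigmaGen (fun q ω => U q.1 q.2.1 q.2.2 ω) (i, t, x)
  have hX := fun t => (measurable_sigmaGen W t).const_add ξ
  have hc : ∀ i t ω, Continuous fun x => U i t x ω :=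
    fun i t ω => (hUcont i ω).comp (Continuous.prodMk_right t)
  have hindep : ∀ t x, iIndepFun (fun i => U i t x) P := fun t x =>
    hUindep.iIndepFun_of_measurable fun i => measurable_sigmaGen _ (t, x)
  have hid : ∀ i t x, IdentDistrib (U i t x) (U ⟨0, hn⟩ t x) P P := fun i t x =>
    identDistrib_of_map_fin_one_eq (hUmeas i t x) (hUmeas _ t x) (hUident i 1 fun _ => (t, x))
  have hcomb := fun t => hindW.lintegral_sq_sum_mul_sub_integral_comp_eq hmU hmW (hX t) r
    (fun i => hc i t) (fun i => hUm i t) (hindep t) (fun i => hid i t) (hint t)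
  have hcenter := fun t =>
    hindW.lintegral_sq_sub_integral_comp_le hmU hmW (hX t) (hc ⟨0, hn⟩ t) (hUm ⟨0, hn⟩ t)
  have hr : 0 ≤ ∑ i, r i ^ 2 := by positivity
  simp only [sq_abs]
  exact ⟨mlpSeminorm_eq_mul_sqrt hW.1 hr hcomb, mlpSeminorm_le_mul_sqrt
    (V' := fun t x ω => U ⟨0, hn⟩ t x ω - ∫ ω', U ⟨0, hn⟩ t x ω' ∂P) hW.1 hr hcomb hcenter⟩

/-- Linear combinations of centered i.i.d. continuous random fields:
`‖∑ rᵢ (Uᵢ − E[Uᵢ])‖ₖ = ‖U₁ − E[U₁]‖ₖ (∑ |rᵢ|²)^(1/2) ≤ ‖U₁‖ₖ (∑ |rᵢ|²)^(1/2)`. -/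
theorem seminorm_linear_combination_iid
    {Ω : Type*} [mΩ : MeasurableSpace Ω] (P : Measure Ω) [IsProbabilityMeasure P]
    (d : ℕ) (T : ℝ) (hT : 0 < T) (ξ : EuclideanSpace ℝ (Fin d))
    (W : ℝ → Ω → EuclideanSpace ℝ (Fin d)) (hW : IsStandardBM P T W)
    (k n : ℕ) (hn : 0 < n) (r : Fin n → ℝ)
    (U : Fin n → ℝ → EuclideanSpace ℝ (Fin d) → Ω → ℝ)
    (hUcont : ∀ i ω, Continuous (fun p : ℝ × EuclideanSpace ℝ (Fin d) => U i p.1 p.2 ω))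
    (hUmeas : ∀ i t x, Measurable (U i t x))
    -- the random fields `U 0, …, U (n-1)` are mutually independent
    (hUindep : iIndep
      (fun i : Fin n =>
        sigmaGen (fun (p : ℝ × EuclideanSpace ℝ (Fin d)) ω => U i p.1 p.2 ω)) P)
    -- the random fields `U 0, …, U (n-1)` are identically distributed
    -- (all finite-dimensional distributions agree)
    (hUident : ∀ (i : Fin n) (m : ℕ) (a : Fin m → ℝ × EuclideanSpace ℝ (Fin d)),
      P.map (fun ω => fun j => U i (a j).1 (a j).2 ω)
        = P.map (fun ω => fun j => U ⟨0, hn⟩ (a j).1 (a j).2 ω))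
    -- the family `(Uᵢ)` is independent of `W`
    (hindW : Indep
      (sigmaGen (fun (q : Fin n × (ℝ × EuclideanSpace ℝ (Fin d))) ω =>
        U q.1 q.2.1 q.2.2 ω))
      (sigmaGen W) P)
    (hint : ∀ t x, Integrable (U ⟨0, hn⟩ t x) P) :
    mlpSeminorm P W ξ T k
        (fun t x ω => ∑ i, r i * (U i t x ω - ∫ ω', U i t x ω' ∂P))
      = mlpSeminorm P W ξ T k
          (fun t x ω => U ⟨0, hn⟩ t x ω - ∫ ω', U ⟨0, hn⟩ t x ω' ∂P)
        * ENNReal.ofReal (Real.sqrt (∑ i, |r i| ^ 2))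
    ∧ mlpSeminorm P W ξ T k
        (fun t x ω => ∑ i, r i * (U i t x ω - ∫ ω', U i t x ω' ∂P))
      ≤ mlpSeminorm P W ξ T k (U ⟨0, hn⟩)
        * ENNReal.ofReal (Real.sqrt (∑ i, |r i| ^ 2)) :=
  seminorm_linear_combination_iid_general (mΩ := mΩ) P d T ξ W hW k n hn r U hUcont hUmeas hUindep
    hUident hindW hint
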